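/- Let $N = mM$ with $m, M \ge 1$, let $u, s \in \mathbb{R}^N$, and let $\bar u_i, \bar s_i$ ($i = 1,\dots,M$) be the segment averages of $u$ and $s$ over the $M$ consecutive blocks of length $m$. Suppose for each $i$ we are given cutlines $\beta_{L_i} \le \beta_{U_i}$ with $\beta_{L_i} \le \bar s_i \le \beta_{U_i}$. Define for each $i$ the clipped term $t_i = (\beta_{L_i} - \bar u_i)^2$ if $\beta_{L_i} > \bar u_i$, $t_i = (\beta_{U_i} - \bar u_i)^2$ if $\beta_{U_i} < \bar u_i$, and $t_i = 0$ otherwise. Then $\sqrt{\frac{N}{M}\sum_{i=1}^M t_i} \le \sqrt{\frac{N}{M}\sum_{i=1}^M (\bar u_i - \bar s_i)^2} \le \|u - s\|_2$. In particular, the lower-bounding property of the $mindist\_PAA$ measure holds for arbitrary quantization intervals, not only the equiprobable Gaussian ones. -/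

import Mathlib

/-!
Clipping `ū` to an interval that contains `s̄` can only bring it closer to `s̄`, which gives the
first inequality term by term. For the second, Cauchy–Schwarz on a block of length `m` says that
`m` times the squared mean of the block is at most its sum of squares; summing over the blocks
gives the Euclidean distance.
-/

open Finset

lemma sq_dist_clip_le {a b x y : ℝ} (hax : a ≤ x) (hxb : x ≤ b) :
    (if a > y then (a - y) ^ 2 else if b < y then (b - y) ^ 2 else 0) ≤ (y - x) ^ 2 := by
  split_ifs with hay hyb
  · nlinarith
  · nlinarith
  · positivity

lemma card_mul_sq_mean_le_sum_sq {ι : Type*} (s : Finset ι) (f : ι → ℝ) :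
    #s * ((1 / #s) * ∑ i ∈ s, f i) ^ 2 ≤ ∑ i ∈ s, f i ^ 2 := by
  rcases s.eq_empty_or_nonempty with rfl | hs
  · simp
  have hcard : (0 : ℝ) < #s := by exact_mod_cast hs.card_pos
  calc (#s : ℝ) * ((1 / #s) * ∑ i ∈ s, f i) ^ 2 = (∑ i ∈ s, f i) ^ 2 / #s := by
        field_simp
    _ ≤ ∑ i ∈ s, f i ^ 2 := by
        rw [div_le_iff₀' hcard]
        exact sq_sum_le_card_mul_sum_sq

lemma sum_range_mul_eq_sum_blocks {β : Type*} [AddCommMonoid β] (m n : ℕ) (f : ℕ → β) :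
    ∑ j ∈ range (m * n), f j = ∑ i ∈ range n, ∑ j ∈ range m, f (m * i + j) := by
  induction n with
  | zero => simp
  | succ n ih => rw [Nat.mul_succ, sum_range_add, ih, sum_range_succ]

lemma card_mul_sum_sq_mean_sub_le {m n : ℕ} (u s : ℕ → ℝ) :
    m * ∑ i ∈ range n, ((1 / (m : ℝ)) * ∑ j ∈ range m, u (m * i + j) -
        (1 / (m : ℝ)) * ∑ j ∈ range m, s (m * i + j)) ^ 2 ≤
      ∑ j ∈ range (m * n), (u j - s j) ^ 2 := by
  rw [sum_range_mul_eq_sum_blocks, mul_sum]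
  refine sum_le_sum fun i _ => ?_
  simpa only [card_range, ← mul_sub, ← sum_sub_distrib] using
    card_mul_sq_mean_le_sum_sq (range m) fun j => u (m * i + j) - s (m * i + j)

theorem mindist_paa_lower_bounds_euclidean_general
    (m M : ℕ)
    (u s : ℕ → ℝ)
    (ubar sbar : ℕ → ℝ)
    (hubar : ∀ i, ubar i = (1 / (m : ℝ)) * ∑ j ∈ Finset.range m, u (m * i + j))
    (hsbar : ∀ i, sbar i = (1 / (m : ℝ)) * ∑ j ∈ Finset.range m, s (m * i + j))
    (βL βU : ℕ → ℝ)
    (hin : ∀ i < M, βL i ≤ sbar i ∧ sbar i ≤ βU i)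
    (t : ℕ → ℝ)
    (ht : ∀ i, t i =
      if βL i > ubar i then (βL i - ubar i) ^ 2
      else if βU i < ubar i then (βU i - ubar i) ^ 2
      else 0) :
    Real.sqrt (((m * M : ℕ) : ℝ) / (M : ℝ) * ∑ i ∈ Finset.range M, t i) ≤
      Real.sqrt (((m * M : ℕ) : ℝ) / (M : ℝ) *
        ∑ i ∈ Finset.range M, (ubar i - sbar i) ^ 2) ∧
    Real.sqrt (((m * M : ℕ) : ℝ) / (M : ℝ) *
        ∑ i ∈ Finset.range M, (ubar i - sbar i) ^ 2) ≤
      Real.sqrt (∑ j ∈ Finset.range (m * M), (u j - s j) ^ 2) := by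
  refine ⟨Real.sqrt_le_sqrt (mul_le_mul_of_nonneg_left (sum_le_sum fun i hi => ?_) (by positivity)),
    Real.sqrt_le_sqrt ?_⟩
  · obtain ⟨hL, hU⟩ := hin i (mem_range.mp hi)
    exact ht i ▸ sq_dist_clip_le hL hU
  · have hcoef : ((m * M : ℕ) : ℝ) / M ≤ m :=
      div_le_of_le_mul₀ (by positivity) (by positivity) (by push_cast; rfl)
    calc ((m * M : ℕ) : ℝ) / M * ∑ i ∈ range M, (ubar i - sbar i) ^ 2
        ≤ m * ∑ i ∈ range M, (ubar i - sbar i) ^ 2 := by gcongr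
      _ ≤ ∑ j ∈ range (m * M), (u j - s j) ^ 2 := by
        simpa only [hubar, hsbar] using card_mul_sum_sq_mean_sub_le u s

/-- Lower-bounding property of `mindist_PAA` for arbitrary quantization
intervals: if each PAA value `s̄ᵢ` lies between its cutlines
`β_{Lᵢ} ≤ s̄ᵢ ≤ β_{Uᵢ}` and the clipped terms `tᵢ` are defined by the three
cases, then
`√((N/M) ∑ tᵢ) ≤ √((N/M) ∑ (ūᵢ - s̄ᵢ)²) ≤ ‖u - s‖₂`. -/
theorem mindist_paa_lower_bounds_euclidean
    (m M : ℕ) (hm : 1 ≤ m) (hM : 1 ≤ M)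
    (u s : ℕ → ℝ)
    (ubar sbar : ℕ → ℝ)
    (hubar : ∀ i, ubar i = (1 / (m : ℝ)) * ∑ j ∈ Finset.range m, u (m * i + j))
    (hsbar : ∀ i, sbar i = (1 / (m : ℝ)) * ∑ j ∈ Finset.range m, s (m * i + j))
    (βL βU : ℕ → ℝ)
    (hcut : ∀ i < M, βL i ≤ βU i)
    (hin : ∀ i < M, βL i ≤ sbar i ∧ sbar i ≤ βU i)
    (t : ℕ → ℝ)
    (ht : ∀ i, t i =
      if βL i > ubar i then (βL i - ubar i) ^ 2
      else if βU i < ubar i then (βU i - ubar i) ^ 2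
      else 0) :
    Real.sqrt (((m * M : ℕ) : ℝ) / (M : ℝ) * ∑ i ∈ Finset.range M, t i) ≤
      Real.sqrt (((m * M : ℕ) : ℝ) / (M : ℝ) *
        ∑ i ∈ Finset.range M, (ubar i - sbar i) ^ 2) ∧
    Real.sqrt (((m * M : ℕ) : ℝ) / (M : ℝ) *
        ∑ i ∈ Finset.range M, (ubar i - sbar i) ^ 2) ≤
      Real.sqrt (∑ j ∈ Finset.range (m * M), (u j - s j) ^ 2) :=
  mindist_paa_lower_bounds_euclidean_general m M u s ubar sbar hubar hsbar βL βU hin t ht
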